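/- arXiv:2403.05786 — 3 statements merged into one kernel-verified Lean document; each statement's English description precedes it below -/
import Mathlib

section
/- Let 𝒳 ⊆ ℝ^d be a convex set containing the origin, let V ∈ ℝ^{d×d} be positive definite, let â_1, …, â_n ∈ ℝ^d, let b ∈ ℝ^n with b_min := min_{i∈[n]} b_i > 0, and let β ≥ 0. Suppose x̃ ∈ 𝒳 satisfies the optimistic constraints â_iᵀ x̃ − β‖x̃‖_{V^{-1}} ≤ b_i for all i ∈ [n]. Then, with α := b_min / (b_min + 2β‖x̃‖_{V^{-1}}), the scaled point α x̃ lies in 𝒳 and satisfies the pessimistic constraints â_iᵀ(α x̃) + β‖α x̃‖_{V^{-1}} ≤ b_i for all i ∈ [n]. -/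
open Matrix

/-- Weighted norm `‖x‖_M := √(xᵀ M x)`. -/
noncomputable def wnorm {d : ℕ} (M : Matrix (Fin d) (Fin d) ℝ) (x : Fin d → ℝ) : ℝ :=
  Real.sqrt (x ⬝ᵥ M.mulVec x)

lemma wnorm_nonneg {d : ℕ} (M : Matrix (Fin d) (Fin d) ℝ) (x : Fin d → ℝ) :
    0 ≤ wnorm M x := Real.sqrt_nonneg _

lemma wnorm_smul {d : ℕ} (M : Matrix (Fin d) (Fin d) ℝ) (x : Fin d → ℝ) (c : ℝ)
    (hc : 0 ≤ c) : wnorm M (c • x) = c * wnorm M x := by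
  unfold wnorm
  rw [Matrix.mulVec_smul, smul_dotProduct, dotProduct_smul, smul_eq_mul, smul_eq_mul,
    ← mul_assoc, ← sq, Real.sqrt_mul (sq_nonneg c), Real.sqrt_sq hc]

theorem stmt0 {d n : ℕ} (𝒳 : Set (Fin d → ℝ)) (hconv : Convex ℝ 𝒳)
    (h0 : (0 : Fin d → ℝ) ∈ 𝒳)
    (V : Matrix (Fin d) (Fin d) ℝ) (hV : V.PosDef)
    (ahat : Fin n → Fin d → ℝ) (b : Fin n → ℝ) (bmin : ℝ)
    (hbmin : IsLeast (Set.range b) bmin) (hbpos : 0 < bmin)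
    (β : ℝ) (hβ : 0 ≤ β)
    (xt : Fin d → ℝ) (hxt : xt ∈ 𝒳)
    (hopt : ∀ i, ahat i ⬝ᵥ xt - β * wnorm V⁻¹ xt ≤ b i) :
    (bmin / (bmin + 2 * β * wnorm V⁻¹ xt)) • xt ∈ 𝒳 ∧
      ∀ i, ahat i ⬝ᵥ ((bmin / (bmin + 2 * β * wnorm V⁻¹ xt)) • xt)
          + β * wnorm V⁻¹ ((bmin / (bmin + 2 * β * wnorm V⁻¹ xt)) • xt) ≤ b i := by
  set w := wnorm V⁻¹ xt with hw
  have hwnn : 0 ≤ w := wnorm_nonneg _ _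
  have hden : 0 < bmin + 2 * β * w := by positivity
  set α := bmin / (bmin + 2 * β * w) with hα
  have hα0 : 0 ≤ α := by positivity
  have hα1 : α ≤ 1 := by
    rw [hα, div_le_one hden]; nlinarith
  constructor
  · have := hconv hxt h0 hα0 (by linarith : (0:ℝ) ≤ 1 - α) (by ring)
    simpa using this
  · intro i
    have hbi : bmin ≤ b i := hbmin.2 ⟨i, rfl⟩
    rw [wnorm_smul _ _ _ hα0, dotProduct_smul, ← hw, smul_eq_mul]
    have h1 : ahat i ⬝ᵥ xt ≤ b i + β * w := by linarith [hopt i]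
    have key : α * (b i + 2 * β * w) ≤ b i := by
      rw [hα, div_mul_eq_mul_div, div_le_iff₀ hden]
      nlinarith [mul_nonneg (mul_nonneg hβ hwnn) (sub_nonneg.2 hbi)]
    nlinarith
end

section
/- Let B, C ∈ ℝ^{d×d} be positive definite matrices with B ⪯ C (i.e., C − B is positive semidefinite). Then for every z ∈ ℝ^d, ‖z‖_{B^{-1}} ≤ (det(C)/det(B)) · ‖z‖_{C^{-1}}. -/
open Matrix

-- eigenvalues ≤ 1 of a matrix with 1 - N psd
lemma eig_le_one {d : ℕ} {N : Matrix (Fin d) (Fin d) ℝ}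
    (hH : N.IsHermitian) (h1 : (1 - N).PosSemidef) (i : Fin d) :
    hH.eigenvalues i ≤ 1 := by
  set v : EuclideanSpace ℝ (Fin d) := hH.eigenvectorBasis i with hv
  have hnorm : (⇑v) ⬝ᵥ (⇑v) = 1 := by
    have h := hH.eigenvectorBasis.orthonormal.1 i
    have : (inner ℝ v v : ℝ) = 1 := by
      rw [real_inner_self_eq_norm_sq, h]; norm_num
    rw [EuclideanSpace.inner_eq_star_dotProduct] at this
    simpa [star_trivial] using this
  have hmv : N *ᵥ ⇑v = hH.eigenvalues i • ⇑v := hH.mulVec_eigenvectorBasis i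
  have h2 := h1.dotProduct_mulVec_nonneg (⇑v)
  simp only [sub_mulVec, one_mulVec, dotProduct_sub, hmv, dotProduct_smul, star_trivial,
    hnorm, smul_eq_mul, mul_one, RCLike.re_to_real] at h2
  linarith

lemma key_spectral {d : ℕ} {N : Matrix (Fin d) (Fin d) ℝ}
    (hN : N.PosDef) (h1 : (1 - N).PosSemidef) (w : Fin d → ℝ) :
    N.det * (w ⬝ᵥ N⁻¹ *ᵥ w) ≤ w ⬝ᵥ w := by
  classical
  have hH := hN.isHermitian
  set ν : Fin d → ℝ := hH.eigenvalues with hν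
  set U : Matrix (Fin d) (Fin d) ℝ := (hH.eigenvectorUnitary : Matrix (Fin d) (Fin d) ℝ) with hU
  have hUU : star U * U = 1 := hH.eigenvectorUnitary.2.1
  have hUU' : U * star U = 1 := hH.eigenvectorUnitary.2.2
  have hspec : N = U * diagonal ν * star U := by
    have := hH.spectral_theorem
    simpa using this
  have hpos : ∀ i, 0 < ν i := fun i => hN.eigenvalues_pos i
  -- inverse
  have hNinv : N⁻¹ = U * diagonal (fun i => (ν i)⁻¹) * star U := by
    apply inv_eq_right_inv
    rw [hspec]
    calc U * diagonal ν * star U * (U * diagonal (fun i => (ν i)⁻¹) * star U)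
        = U * (diagonal ν * (star U * U) * diagonal (fun i => (ν i)⁻¹)) * star U := by
          noncomm_ring
      _ = 1 := by
          rw [hUU, mul_one, diagonal_mul_diagonal]
          have : (fun i => ν i * (ν i)⁻¹) = fun _ => (1:ℝ) := by
            funext i; exact mul_inv_cancel₀ (hpos i).ne'
          rw [this, diagonal_one, mul_one, hUU']
  set u : Fin d → ℝ := star U *ᵥ w with hu
  have hvm : w ᵥ* U = u := by
    rw [hu, Matrix.star_eq_conjTranspose, conjTranspose_eq_transpose_of_trivial,
      mulVec_transpose]
  have h2 : w ⬝ᵥ N⁻¹ *ᵥ w = ∑ i, (ν i)⁻¹ * (u i) ^ 2 := by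
    rw [hNinv, ← Matrix.mulVec_mulVec, ← Matrix.mulVec_mulVec, dotProduct_mulVec, hvm, ← hu]
    simp only [dotProduct, mulVec_diagonal]
    exact Finset.sum_congr rfl fun i _ => by ring
  have h3 : w ⬝ᵥ w = ∑ i, (u i) ^ 2 := by
    have hstar : star U = Uᵀ := by
      rw [Matrix.star_eq_conjTranspose, conjTranspose_eq_transpose_of_trivial]
    have : u ⬝ᵥ u = w ⬝ᵥ w := by
      rw [hu, dotProduct_mulVec, hstar, vecMul_transpose, Matrix.mulVec_mulVec, ← hstar,
        hUU', one_mulVec]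
    rw [← this]
    simp [dotProduct, sq]
  have hdet : N.det = ∏ i, ν i := by
    simpa using hH.det_eq_prod_eigenvalues
  rw [h2, h3, hdet, Finset.mul_sum]
  apply Finset.sum_le_sum
  intro i _
  have hle : ∀ j, ν j ≤ 1 := eig_le_one hH h1
  have hprod : (∏ j, ν j) * (ν i)⁻¹ = ∏ j ∈ Finset.univ.erase i, ν j := by
    rw [← Finset.mul_prod_erase Finset.univ ν (Finset.mem_univ i)]
    field_simp [(hpos i).ne']
  have hprodle : (∏ j ∈ Finset.univ.erase i, ν j) ≤ 1 :=
    Finset.prod_le_one (fun j _ => (hpos j).le) (fun j _ => hle j)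
  calc (∏ j, ν j) * ((ν i)⁻¹ * u i ^ 2) = ((∏ j, ν j) * (ν i)⁻¹) * u i ^ 2 := by ring
    _ ≤ 1 * u i ^ 2 := by
        apply mul_le_mul_of_nonneg_right _ (sq_nonneg _)
        rw [hprod]; exact hprodle
    _ = u i ^ 2 := one_mul _

lemma det_le_one_aux {d : ℕ} {N : Matrix (Fin d) (Fin d) ℝ}
    (hN : N.PosDef) (h1 : (1 - N).PosSemidef) : N.det ≤ 1 := by
  have hH := hN.isHermitian
  have hdet : N.det = ∏ i, hH.eigenvalues i := by
    simpa using hH.det_eq_prod_eigenvalues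
  rw [hdet]
  exact Finset.prod_le_one (fun i _ => (hN.eigenvalues_pos i).le)
    (fun i _ => eig_le_one hH h1 i)

open scoped MatrixOrder in
lemma exists_sqrt_aux {d : ℕ} {C : Matrix (Fin d) (Fin d) ℝ} (hC : C.PosSemidef) :
    ∃ S : Matrix (Fin d) (Fin d) ℝ, S.PosSemidef ∧ S * S = C :=
  ⟨CFC.sqrt C, (CFC.sqrt_nonneg C).posSemidef, CFC.sqrt_mul_sqrt_self C hC.nonneg⟩

theorem stmt6 {d : ℕ} (B C : Matrix (Fin d) (Fin d) ℝ)
    (hB : B.PosDef) (hC : C.PosDef) (hBC : (C - B).PosSemidef)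
    (z : Fin d → ℝ) :
    wnorm B⁻¹ z ≤ (C.det / B.det) * wnorm C⁻¹ z := by
  classical
  obtain ⟨S, hS, hSS⟩ := exists_sqrt_aux hC.posSemidef
  have hdetS : S.det * S.det = C.det := by rw [← det_mul, hSS]
  have hSdet_ne : S.det ≠ 0 := by
    intro h; rw [h, mul_zero] at hdetS; exact hC.det_pos.ne (by linarith)
  have hSunit : IsUnit S.det := isUnit_iff_ne_zero.2 hSdet_ne
  have hSinv : S⁻¹.PosSemidef := hS.inv
  have hSinvT : (S⁻¹)ᴴ = S⁻¹ := hSinv.1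
  have hSmul : S⁻¹ * S = 1 := nonsing_inv_mul S hSunit
  have hSmul' : S * S⁻¹ = 1 := mul_nonsing_inv S hSunit
  set N := S⁻¹ * B * S⁻¹ with hNdef
  -- dotProduct conjugation helper
  have hdot : ∀ (M : Matrix (Fin d) (Fin d) ℝ) (x : Fin d → ℝ),
      x ⬝ᵥ (S⁻¹ * M * S⁻¹) *ᵥ x = (S⁻¹ *ᵥ x) ⬝ᵥ M *ᵥ (S⁻¹ *ᵥ x) := by
    intro M x
    rw [← Matrix.mulVec_mulVec, ← Matrix.mulVec_mulVec, dotProduct_mulVec]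
    congr 1
    rw [← mulVec_transpose, ← conjTranspose_eq_transpose_of_trivial, hSinvT]
  have hN : N.PosDef := by
    refine PosDef.of_dotProduct_mulVec_pos ?_ ?_
    · have := isHermitian_conjTranspose_mul_mul S⁻¹ hB.1
      rwa [hSinvT] at this
    · intro x hx
      have hy : S⁻¹ *ᵥ x ≠ 0 := by
        intro h
        apply hx
        have : S *ᵥ (S⁻¹ *ᵥ x) = x := by
          rw [Matrix.mulVec_mulVec, hSmul', one_mulVec]
        rw [h, mulVec_zero] at this
        exact this.symm
      have := hB.dotProduct_mulVec_pos hy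
      simpa [hNdef, hdot B x, star_trivial] using this
  have h1N : (1 - N).PosSemidef := by
    have heq : 1 - N = S⁻¹ * (C - B) * S⁻¹ := by
      rw [hNdef, Matrix.mul_sub, Matrix.sub_mul, ← hSS]
      have : S⁻¹ * (S * S) * S⁻¹ = 1 := by
        rw [← Matrix.mul_assoc, hSmul, Matrix.one_mul, hSmul']
      rw [this]
    rw [heq]
    have := hBC.conjTranspose_mul_mul_same S⁻¹
    rwa [hSinvT] at this
  have hNinv : N⁻¹ = S * B⁻¹ * S := by
    rw [hNdef, Matrix.mul_inv_rev, Matrix.mul_inv_rev,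
      Matrix.nonsing_inv_nonsing_inv S hSunit, Matrix.mul_assoc]
  have hNdet : N.det = B.det / C.det := by
    rw [hNdef, det_mul, det_mul, det_nonsing_inv, Ring.inverse_eq_inv', ← hdetS]
    field_simp
  -- apply key lemma with w = S⁻¹ *ᵥ z
  have key := key_spectral hN h1N (S⁻¹ *ᵥ z)
  have hw1 : (S⁻¹ *ᵥ z) ⬝ᵥ (S⁻¹ *ᵥ z) = z ⬝ᵥ C⁻¹ *ᵥ z := by
    have : C⁻¹ = S⁻¹ * 1 * S⁻¹ := by
      rw [Matrix.mul_one, ← Matrix.mul_inv_rev, hSS]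
    rw [this, hdot 1 z, one_mulVec]
  have hw2 : (S⁻¹ *ᵥ z) ⬝ᵥ N⁻¹ *ᵥ (S⁻¹ *ᵥ z) = z ⬝ᵥ B⁻¹ *ᵥ z := by
    have : (S⁻¹ * N⁻¹ * S⁻¹ : Matrix (Fin d) (Fin d) ℝ) = B⁻¹ := by
      rw [hNinv, ← Matrix.mul_assoc, ← Matrix.mul_assoc, hSmul, Matrix.one_mul,
        Matrix.mul_assoc, hSmul', Matrix.mul_one]
    rw [← hdot N⁻¹ z, this]
  rw [hw1, hw2, hNdet] at key
  -- now: B.det / C.det * (z ⬝ᵥ B⁻¹ *ᵥ z) ≤ z ⬝ᵥ C⁻¹ *ᵥ z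
  have hdB : 0 < B.det := hB.det_pos
  have hdC : 0 < C.det := hC.det_pos
  have hQB : z ⬝ᵥ B⁻¹ *ᵥ z ≤ (C.det / B.det) * (z ⬝ᵥ C⁻¹ *ᵥ z) := by
    rw [div_mul_eq_mul_div, le_div_iff₀ hdB]
    calc (z ⬝ᵥ B⁻¹ *ᵥ z) * B.det = C.det * (B.det / C.det * (z ⬝ᵥ B⁻¹ *ᵥ z)) := by
          field_simp
      _ ≤ C.det * (z ⬝ᵥ C⁻¹ *ᵥ z) := by
          exact mul_le_mul_of_nonneg_left key hdC.le
  have hk1 : (1:ℝ) ≤ C.det / B.det := by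
    have hdet_le : B.det ≤ C.det := by
      have := det_le_one_aux hN h1N
      rw [hNdet, div_le_one hdC] at this
      exact this
    rw [le_div_iff₀ hdB, one_mul]
    exact hdet_le
  have hknn : (0:ℝ) ≤ C.det / B.det := by linarith
  unfold wnorm
  calc Real.sqrt (z ⬝ᵥ B⁻¹ *ᵥ z)
      ≤ Real.sqrt ((C.det / B.det) * (z ⬝ᵥ C⁻¹ *ᵥ z)) := Real.sqrt_le_sqrt hQB
    _ = Real.sqrt (C.det / B.det) * Real.sqrt (z ⬝ᵥ C⁻¹ *ᵥ z) := Real.sqrt_mul hknn _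
    _ ≤ (C.det / B.det) * Real.sqrt (z ⬝ᵥ C⁻¹ *ᵥ z) := by
        apply mul_le_mul_of_nonneg_right _ (Real.sqrt_nonneg _)
        calc Real.sqrt (C.det / B.det) ≤ Real.sqrt ((C.det / B.det)^2) := by
              apply Real.sqrt_le_sqrt
              nlinarith
          _ = C.det / B.det := Real.sqrt_sq hknn
end

section
/- Let d ≥ 1, let T ≥ 3 be an integer, let D, G, b_min > 0, β > 0, and λ := max(1, D²). Let x̃_1, …, x̃_T ∈ ℝ^d with ‖x̃_t‖ ≤ D for all t, let γ_t ∈ [0,1], set x_t := γ_t x̃_t and V_t := λ I_d + Σ_{s=1}^{t−1} x_s x_sᵀ. Let 1 = t_1 ≤ t_2 ≤ ⋯ ≤ t_N ≤ T be phase start times; for each t, let j_t := max{ j ∈ [N] : t_j ≤ t } and V̄_{j_t} := V_{t_{j_t}}. Assume for every t ∈ [T] that (i) det(V_t) ≤ 2 det(V̄_{j_t}) and (ii) γ_t ≥ 1 − (2β/b_min)‖x_t‖_{V̄_{j_t}^{-1}}. Let f_1, …, f_T : ℝ^d → ℝ be G-Lipschitz with respect to the Euclidean norm. Then Σ_{t=1}^T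 (f_t(x_t) − f_t(x̃_t)) ≤ (4 D G β / b_min) √(3 d T log T), where log denotes the natural logarithm. -/
set_option maxHeartbeats 1000000

open Matrix

/-- Euclidean norm on `ℝ^d`. -/
noncomputable def euclNorm {d : ℕ} (x : Fin d → ℝ) : ℝ :=
  Real.sqrt (∑ i, x i ^ 2)

section Helpers
open Finset
variable {d : ℕ}

lemma psd_sum {ι : Type*} (s : Finset ι) (F : ι → Matrix (Fin d) (Fin d) ℝ)
    (h : ∀ i ∈ s, (F i).PosSemidef) : (∑ i ∈ s, F i).PosSemidef := by
  classical
  induction s using Finset.induction with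
  | empty => simpa using Matrix.PosSemidef.zero
  | insert a s hni ih =>
    rw [Finset.sum_insert hni]
    exact ((h _ (Finset.mem_insert_self _ _)).add
      (ih fun i hi => h i (Finset.mem_insert_of_mem hi)))

lemma psd_vecMulVec (x : Fin d → ℝ) : (vecMulVec x x).PosSemidef := by
  have h := posSemidef_conjTranspose_mul_self (replicateRow Unit x)
  simpa [vecMulVec_eq Unit, conjTranspose_replicateRow] using h

lemma pd_smul_one {c : ℝ} (hc : 0 < c) : ((c • (1:Matrix (Fin d) (Fin d) ℝ))).PosDef := by
  rw [smul_one_eq_diagonal]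
  exact posDef_diagonal_iff.mpr fun _ => hc

lemma euclNorm_nonneg (v : Fin d → ℝ) : 0 ≤ euclNorm v := Real.sqrt_nonneg _

lemma dot_self_le_sq {v : Fin d → ℝ} {D : ℝ} (h : euclNorm v ≤ D) : v ⬝ᵥ v ≤ D^2 := by
  have hs : (0:ℝ) ≤ ∑ i, v i ^ 2 := Finset.sum_nonneg fun i _ => sq_nonneg _
  have h2 : (Real.sqrt (∑ i, v i ^ 2))^2 ≤ D^2 :=
    pow_le_pow_left₀ (Real.sqrt_nonneg _) h 2
  rw [Real.sq_sqrt hs] at h2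
  simpa [dotProduct, pow_two] using h2

lemma euclNorm_smul (c : ℝ) (v : Fin d → ℝ) : euclNorm (c • v) = |c| * euclNorm v := by
  unfold euclNorm
  rw [← Real.sqrt_sq_eq_abs, ← Real.sqrt_mul (sq_nonneg c)]
  congr 1
  rw [Finset.mul_sum]
  exact Finset.sum_congr rfl fun i _ => by simp [Pi.smul_apply]; ring


lemma psd_form {M : Matrix (Fin d) (Fin d) ℝ} (hM : M.PosSemidef) (y : Fin d → ℝ) :
    0 ≤ y ⬝ᵥ M *ᵥ y := by simpa using hM.dotProduct_mulVec_nonneg y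

lemma pd_isUnit_det {M : Matrix (Fin d) (Fin d) ℝ} (hM : M.PosDef) : IsUnit M.det :=
  isUnit_iff_ne_zero.mpr hM.det_pos.ne'

lemma pd_mulVec_inv {M : Matrix (Fin d) (Fin d) ℝ} (hM : M.PosDef) (v : Fin d → ℝ) :
    M *ᵥ (M⁻¹ *ᵥ v) = v := by
  rw [Matrix.mulVec_mulVec, Matrix.mul_nonsing_inv _ (pd_isUnit_det hM), Matrix.one_mulVec]

lemma herm_transpose_eq {M : Matrix (Fin d) (Fin d) ℝ} (hM : M.IsHermitian) : Mᵀ = M := by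
  have := hM.eq; simpa [Matrix.conjTranspose_eq_transpose_of_trivial] using this

lemma herm_dot {M : Matrix (Fin d) (Fin d) ℝ} (hM : M.IsHermitian) (u y : Fin d → ℝ) :
    u ⬝ᵥ M *ᵥ y = (M *ᵥ u) ⬝ᵥ y := by
  rw [Matrix.dotProduct_mulVec, ← Matrix.mulVec_transpose, herm_transpose_eq hM]

lemma quad_lower {M : Matrix (Fin d) (Fin d) ℝ} (hM : M.PosDef) (x y : Fin d → ℝ) :
    2*(x ⬝ᵥ y) - y ⬝ᵥ M *ᵥ y ≤ x ⬝ᵥ M⁻¹ *ᵥ x := by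
  set u := M⁻¹ *ᵥ x with hu
  have h0 : 0 ≤ (y - u) ⬝ᵥ M *ᵥ (y - u) := psd_form hM.posSemidef _
  have hMu : M *ᵥ u = x := pd_mulVec_inv hM x
  have e1 : u ⬝ᵥ M *ᵥ y = x ⬝ᵥ y := by rw [herm_dot hM.isHermitian, hMu]
  have e2 : y ⬝ᵥ M *ᵥ u = x ⬝ᵥ y := by rw [hMu, dotProduct_comm]
  have e3 : u ⬝ᵥ M *ᵥ u = x ⬝ᵥ M⁻¹ *ᵥ x := by rw [hMu, dotProduct_comm, hu]
  rw [Matrix.mulVec_sub, sub_dotProduct, dotProduct_sub,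
    dotProduct_sub] at h0
  linarith

lemma inv_quad_eq {M : Matrix (Fin d) (Fin d) ℝ} (hM : M.PosDef) (x : Fin d → ℝ) :
    x ⬝ᵥ M⁻¹ *ᵥ x
      = 2*(x ⬝ᵥ (M⁻¹ *ᵥ x)) - (M⁻¹ *ᵥ x) ⬝ᵥ M *ᵥ (M⁻¹ *ᵥ x) := by
  rw [pd_mulVec_inv hM, dotProduct_comm (M⁻¹ *ᵥ x) x]; ring

lemma inv_antitone_pt {A B : Matrix (Fin d) (Fin d) ℝ} (hA : A.PosDef) (hB : B.PosDef)
    (hAB : (A - B).PosSemidef) (x : Fin d → ℝ) :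
    x ⬝ᵥ A⁻¹ *ᵥ x ≤ x ⬝ᵥ B⁻¹ *ᵥ x := by
  set u := A⁻¹ *ᵥ x with hu
  have h1 : u ⬝ᵥ B *ᵥ u ≤ u ⬝ᵥ A *ᵥ u := by
    have := psd_form hAB u
    rw [Matrix.sub_mulVec, dotProduct_sub] at this; linarith
  have h2 := quad_lower hB x u
  have h3 := inv_quad_eq hA x
  rw [← hu] at h3
  linarith

lemma inv_antitone {A B : Matrix (Fin d) (Fin d) ℝ} (hA : A.PosDef) (hB : B.PosDef)
    (hAB : (A - B).PosSemidef) : (B⁻¹ - A⁻¹).PosSemidef := by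
  refine Matrix.PosSemidef.of_dotProduct_mulVec_nonneg (hB.inv.isHermitian.sub hA.inv.isHermitian) fun x => ?_
  have := inv_antitone_pt hA hB hAB x
  simp only [star_trivial, Matrix.sub_mulVec, dotProduct_sub]
  linarith
open Matrix Finset
variable {d : ℕ}

lemma eig_ge_one {M : Matrix (Fin d) (Fin d) ℝ} (hH : M.IsHermitian)
    (h1 : (M - 1).PosSemidef) (i : Fin d) : 1 ≤ hH.eigenvalues i := by
  set v : Fin d → ℝ := ⇑(hH.eigenvectorBasis i) with hv
  have hmv : M *ᵥ v = hH.eigenvalues i • v := hH.mulVec_eigenvectorBasis i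
  have hvv : v ⬝ᵥ v = 1 := by
    have hnorm : ‖hH.eigenvectorBasis i‖ = 1 := hH.eigenvectorBasis.orthonormal.1 i
    have : (inner ℝ (hH.eigenvectorBasis i) (hH.eigenvectorBasis i) : ℝ) = 1 := by
      rw [real_inner_self_eq_norm_sq, hnorm]; norm_num
    rw [EuclideanSpace.inner_eq_star_dotProduct] at this
    simpa [dotProduct] using this
  have h0 : 0 ≤ v ⬝ᵥ (M - 1) *ᵥ v := by simpa using h1.dotProduct_mulVec_nonneg v
  rw [Matrix.sub_mulVec, dotProduct_sub, hmv, Matrix.one_mulVec,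
    dotProduct_smul, hvv] at h0
  simpa using h0

lemma quad_le_det_mul {M : Matrix (Fin d) (Fin d) ℝ} (hH : M.IsHermitian)
    (h1 : (M - 1).PosSemidef) (y : Fin d → ℝ) :
    y ⬝ᵥ M *ᵥ y ≤ M.det * (y ⬝ᵥ y) := by
  classical
  set U : Matrix (Fin d) (Fin d) ℝ := (hH.eigenvectorUnitary : Matrix (Fin d) (Fin d) ℝ) with hU
  set μ : Fin d → ℝ := hH.eigenvalues with hμ
  have hdet : M.det = ∏ i, μ i := by
    simpa using hH.det_eq_prod_eigenvalues
  set z : Fin d → ℝ := Uᵀ *ᵥ y with hz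
  have hUU : U * Uᵀ = 1 := by
    have := (Matrix.mem_unitaryGroup_iff).mp hH.eigenvectorUnitary.2
    simpa [Matrix.star_eq_conjTranspose, Matrix.conjTranspose_eq_transpose_of_trivial] using this
  have hdotU : ∀ w : Fin d → ℝ, y ⬝ᵥ U *ᵥ w = z ⬝ᵥ w := by
    intro w
    rw [Matrix.dotProduct_mulVec, hz, Matrix.mulVec_transpose]
  have hyMy : y ⬝ᵥ M *ᵥ y = ∑ i, μ i * (z i)^2 := by
    have hsp := hH.spectral_theorem
    rw [Unitary.conjStarAlgAut_apply] at hsp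
    rw [Matrix.star_eq_conjTranspose, Matrix.conjTranspose_eq_transpose_of_trivial] at hsp
    calc y ⬝ᵥ M *ᵥ y
        = y ⬝ᵥ (U * (diagonal (RCLike.ofReal ∘ μ) * Uᵀ)) *ᵥ y := by rw [← Matrix.mul_assoc, ← hsp]
      _ = y ⬝ᵥ U *ᵥ (diagonal (RCLike.ofReal ∘ μ) *ᵥ z) := by
          rw [← Matrix.mulVec_mulVec, ← Matrix.mulVec_mulVec]
      _ = z ⬝ᵥ (diagonal (RCLike.ofReal ∘ μ) *ᵥ z) := hdotU _
      _ = ∑ i, μ i * (z i)^2 := by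
          simp [dotProduct, Matrix.mulVec_diagonal]
          ring_nf
          exact Finset.sum_congr rfl fun i _ => by ring
  have hyy : y ⬝ᵥ y = ∑ i, (z i)^2 := by
    have : z ⬝ᵥ z = y ⬝ᵥ (U * Uᵀ) *ᵥ y := by
      rw [← Matrix.mulVec_mulVec, hdotU]
    rw [hUU, Matrix.one_mulVec] at this
    rw [← this]
    simp [dotProduct, pow_two]
  have hone : ∀ i, 1 ≤ μ i := eig_ge_one hH h1
  have hμle : ∀ i : Fin d, μ i ≤ ∏ j, μ j := by
    intro i
    rw [← Finset.prod_erase_mul Finset.univ μ (Finset.mem_univ i)]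
    have h1le : (1:ℝ) ≤ ∏ j ∈ Finset.univ.erase i, μ j := by
      have := Finset.prod_le_prod (s := Finset.univ.erase i) (f := fun _ => (1:ℝ)) (g := μ)
        (by simp) (fun j _ => hone j)
      simpa using this
    nlinarith [hone i]
  rw [hyMy, hyy, hdet, Finset.mul_sum]
  exact Finset.sum_le_sum fun i _ => by
    have := hμle i
    nlinarith [sq_nonneg (z i)]

lemma psd_det_nonneg {R : Matrix (Fin d) (Fin d) ℝ} (hR : R.PosSemidef) : 0 ≤ R.det := by
  have h := hR.1.det_eq_prod_eigenvalues
  have : R.det = ∏ i, hR.1.eigenvalues i := by simpa using h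
  rw [this]
  exact Finset.prod_nonneg fun i _ => hR.eigenvalues_nonneg i

open scoped MatrixOrder in
lemma lemmaA {A B : Matrix (Fin d) (Fin d) ℝ} (hA : A.PosDef) (hB : B.PosDef)
    (hAB : (A - B).PosSemidef) (x : Fin d → ℝ) :
    x ⬝ᵥ B⁻¹ *ᵥ x ≤ (A.det / B.det) * (x ⬝ᵥ A⁻¹ *ᵥ x) := by
  classical
  set R : Matrix (Fin d) (Fin d) ℝ := CFC.sqrt A with hR
  have hRpsd : R.PosSemidef := Matrix.nonneg_iff_posSemidef.mp (CFC.sqrt_nonneg A)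
  have hRH : R.IsHermitian := hRpsd.1
  have hRR : R * R = A := CFC.sqrt_mul_sqrt_self A hA.posSemidef.nonneg
  have hdetR : R.det * R.det = A.det := by rw [← Matrix.det_mul, hRR]
  have hdetRpos : 0 < R.det := by
    rcases lt_or_eq_of_le (psd_det_nonneg hRpsd) with h | h
    · exact h
    · exfalso; have := hA.det_pos; rw [← hdetR, ← h] at this; simp at this
  have hRunit : IsUnit R.det := isUnit_iff_ne_zero.mpr hdetRpos.ne'
  have hRRinv : R * R⁻¹ = 1 := Matrix.mul_nonsing_inv _ hRunit
  have hRinvR : R⁻¹ * R = 1 := Matrix.nonsing_inv_mul _ hRunit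
  have hAinv : A⁻¹ = R⁻¹ * R⁻¹ := by rw [← hRR, Matrix.mul_inv_rev]
  set M : Matrix (Fin d) (Fin d) ℝ := R * B⁻¹ * R with hM
  have hMH : M.IsHermitian := by
    show Mᴴ = M
    rw [hM, Matrix.conjTranspose_mul, Matrix.conjTranspose_mul, hRH.eq,
      hB.inv.isHermitian.eq, Matrix.mul_assoc]
  have hRAR : R * A⁻¹ * R = 1 := by
    rw [hAinv, ← Matrix.mul_assoc R R⁻¹ R⁻¹, hRRinv, Matrix.one_mul, hRinvR]
  have hM1 : (M - 1).PosSemidef := by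
    have hΔ : (B⁻¹ - A⁻¹).PosSemidef := inv_antitone hA hB hAB
    have := hΔ.conjTranspose_mul_mul_same R
    have he : Rᴴ * (B⁻¹ - A⁻¹) * R = M - 1 := by
      rw [hRH.eq, Matrix.mul_sub, Matrix.sub_mul, hRAR, hM]
    rwa [he] at this
  have hdetM : M.det = A.det / B.det := by
    rw [hM, Matrix.det_mul, Matrix.det_mul, Matrix.det_nonsing_inv, Ring.inverse_eq_inv']
    rw [← hdetR]
    field_simp
  set y : Fin d → ℝ := R⁻¹ *ᵥ x with hy
  have hRy : R *ᵥ y = x := by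
    rw [hy, Matrix.mulVec_mulVec, hRRinv, Matrix.one_mulVec]
  have hq1 : y ⬝ᵥ M *ᵥ y = x ⬝ᵥ B⁻¹ *ᵥ x := by
    have : M *ᵥ y = R *ᵥ (B⁻¹ *ᵥ x) := by
      rw [hM, ← Matrix.mulVec_mulVec, ← Matrix.mulVec_mulVec, hRy]
    rw [this, herm_dot hRH, hRy]
  have hq2 : y ⬝ᵥ y = x ⬝ᵥ A⁻¹ *ᵥ x := by
    have h1 : A⁻¹ *ᵥ x = R⁻¹ *ᵥ (R⁻¹ *ᵥ x) := by rw [Matrix.mulVec_mulVec, hAinv]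
    rw [h1, herm_dot hRH.inv, hy]
    exact dotProduct_comm _ _
  have hmain := quad_le_det_mul hMH hM1 y
  rw [hq1, hq2, hdetM] at hmain
  exact hmain

lemma det_add_vecMulVec {M : Matrix (Fin d) (Fin d) ℝ} (hM : M.PosDef) (x : Fin d → ℝ) :
    (M + vecMulVec x x).det = M.det * (1 + x ⬝ᵥ M⁻¹ *ᵥ x) := by
  classical
  have hu : IsUnit M.det := isUnit_iff_ne_zero.mpr hM.det_pos.ne'
  have hkey : M + vecMulVec x x = M * (1 + replicateCol Unit (M⁻¹ *ᵥ x) * replicateRow Unit x) := by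
    rw [Matrix.mul_add, Matrix.mul_one, ← Matrix.mul_assoc, ← Matrix.replicateCol_mulVec,
      Matrix.mulVec_mulVec, Matrix.mul_nonsing_inv _ hu, Matrix.one_mulVec,
      vecMulVec_eq Unit]
  rw [hkey, Matrix.det_mul, Matrix.det_one_add_replicateCol_mul_replicateRow]

lemma le_two_log {u : ℝ} (h0 : 0 ≤ u) (h1 : u ≤ 1) : u ≤ 2 * Real.log (1 + u) := by
  have hpos : (0:ℝ) < 1 + u := by linarith
  have hexp : Real.exp (u/2) ≤ 1 + u := by
    have h2 : 1 - u/2 ≤ Real.exp (-(u/2)) := by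
      have := Real.add_one_le_exp (-(u/2)); linarith
    have h3 : (0:ℝ) < 1 - u/2 := by linarith
    have h4 : Real.exp (u/2) ≤ 1/(1 - u/2) := by
      rw [le_div_iff₀ h3]
      have h5 : Real.exp (u/2) * (1 - u/2) ≤ Real.exp (u/2) * Real.exp (-(u/2)) := by
        apply mul_le_mul_of_nonneg_left h2 (Real.exp_nonneg _)
      rwa [← Real.exp_add, add_neg_cancel, Real.exp_zero] at h5
    have h6 : 1/(1 - u/2) ≤ 1 + u := by
      rw [div_le_iff₀ h3]; nlinarith
    linarith
  have := (Real.le_log_iff_exp_le hpos).mpr hexp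
  linarith

lemma trace_eq_sum_eig {W : Matrix (Fin d) (Fin d) ℝ} (hH : W.IsHermitian) :
    W.trace = ∑ i, hH.eigenvalues i := by
  set U : Matrix (Fin d) (Fin d) ℝ := (hH.eigenvectorUnitary : Matrix (Fin d) (Fin d) ℝ)
  have hUU : star U * U = 1 := (Matrix.mem_unitaryGroup_iff').mp hH.eigenvectorUnitary.2
  calc W.trace = (U * diagonal (RCLike.ofReal ∘ hH.eigenvalues) * star U).trace := by
        conv_lhs => rw [hH.spectral_theorem, Unitary.conjStarAlgAut_apply]
    _ = (star U * (U * diagonal (RCLike.ofReal ∘ hH.eigenvalues))).trace := by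
        rw [Matrix.trace_mul_comm]
    _ = (diagonal (RCLike.ofReal ∘ hH.eigenvalues)).trace := by
        rw [← Matrix.mul_assoc, hUU, Matrix.one_mul]
    _ = ∑ i, hH.eigenvalues i := by simp [Matrix.trace_diagonal]

lemma det_le_trace_pow {W : Matrix (Fin d) (Fin d) ℝ} (hW : W.PosDef) (hd : 0 < d) :
    W.det ≤ (W.trace / d) ^ d := by
  classical
  set μ := hW.isHermitian.eigenvalues with hμ
  have hμ0 : ∀ i, 0 ≤ μ i := fun i => hW.posSemidef.eigenvalues_nonneg i
  have hdet : W.det = ∏ i, μ i := by simpa using hW.isHermitian.det_eq_prod_eigenvalues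
  have htr : W.trace = ∑ i, μ i := trace_eq_sum_eig hW.isHermitian
  have hw : ∑ _i : Fin d, (1:ℝ)/d = 1 := by
    simp [Finset.sum_const]
    field_simp
  have hgm := Real.geom_mean_le_arith_mean_weighted Finset.univ (fun _ => (1:ℝ)/d) μ
    (fun i _ => by positivity) hw (fun i _ => hμ0 i)
  -- hgm : ∏ i, μ i ^ (1/d : ℝ) ≤ ∑ i, (1/d) * μ i
  have hprod : ∏ i, (μ i) ^ ((1:ℝ)/d) = (∏ i, μ i) ^ ((1:ℝ)/d) := by
    rw [← Real.finset_prod_rpow Finset.univ μ (fun i _ => hμ0 i)]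
  have hsum : ∑ i, ((1:ℝ)/d) * μ i = W.trace / d := by
    rw [htr, Finset.sum_div]
    exact Finset.sum_congr rfl fun i _ => by ring
  rw [hprod, hsum] at hgm
  have hPnn : 0 ≤ ∏ i, μ i := Finset.prod_nonneg fun i _ => hμ0 i
  have h2 : ((∏ i, μ i) ^ ((1:ℝ)/d)) ^ (d:ℕ) ≤ (W.trace / d) ^ (d:ℕ) := by
    apply pow_le_pow_left₀ (Real.rpow_nonneg hPnn _) hgm
  rw [← Real.rpow_natCast ((∏ i, μ i) ^ ((1:ℝ)/d)) d, ← Real.rpow_mul hPnn,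
    one_div, inv_mul_cancel₀ (by exact_mod_cast hd.ne' : (d:ℝ) ≠ 0), Real.rpow_one] at h2
  rw [hdet]
  exact h2





end Helpers

open Finset in
theorem stmt7 {d T N : ℕ} (hd : 1 ≤ d) (hT : 3 ≤ T) (hN : 0 < N)
    (D G bmin β lam : ℝ) (hD : 0 < D) (hG : 0 < G) (hbmin : 0 < bmin) (hβ : 0 < β)
    (hlam : lam = max 1 (D ^ 2))
    -- the optimistic actions and the safe scalings
    (xt : Fin T → Fin d → ℝ) (hxt : ∀ t, euclNorm (xt t) ≤ D)
    (γ : Fin T → ℝ) (hγ : ∀ t, γ t ∈ Set.Icc (0 : ℝ) 1)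
    (x : Fin T → Fin d → ℝ) (hx : ∀ t, x t = γ t • xt t)
    -- the Gram matrices
    (V : Fin T → Matrix (Fin d) (Fin d) ℝ)
    (hV : ∀ t, V t = lam • (1 : Matrix (Fin d) (Fin d) ℝ)
        + ∑ s ∈ Finset.univ.filter (fun s => s < t), vecMulVec (x s) (x s))
    -- phase start times (0-indexed: `ts ⟨0,_⟩ = 0` corresponds to `t_1 = 1`)
    (ts : Fin N → Fin T) (hts0 : ts ⟨0, hN⟩ = ⟨0, by omega⟩) (htsmono : Monotone ts)
    -- phase index of each round: the largest `k` with `ts k ≤ t`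
    (j : Fin T → Fin N) (hj : ∀ t, IsGreatest {k : Fin N | ts k ≤ t} (j t))
    -- (i) rare updates: `det (V t) ≤ 2 det (V̄ (j t))`
    (hdet : ∀ t, (V t).det ≤ 2 * (V (ts (j t))).det)
    -- (ii) safe-scaling lower bound
    (hγlb : ∀ t, 1 - (2 * β / bmin) * wnorm (V (ts (j t)))⁻¹ (x t) ≤ γ t)
    -- G-Lipschitz cost functions
    (f : Fin T → (Fin d → ℝ) → ℝ)
    (hf : ∀ t y z, |f t y - f t z| ≤ G * euclNorm (y - z)) :
    ∑ t, (f t (x t) - f t (xt t))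
      ≤ (4 * D * G * β / bmin) * Real.sqrt (3 * d * T * Real.log T) := by
  classical
  have hlam1 : (1:ℝ) ≤ lam := hlam ▸ le_max_left _ _
  have hlamD : D^2 ≤ lam := hlam ▸ le_max_right _ _
  have hlam0 : (0:ℝ) < lam := lt_of_lt_of_le one_pos hlam1
  have hpd1 : ((lam • (1:Matrix (Fin d) (Fin d) ℝ))).PosDef := pd_smul_one hlam0
  -- positive definiteness of all Gram matrices
  have hVpd : ∀ t, (V t).PosDef := by
    intro t
    rw [hV t]
    exact hpd1.add_posSemidef (psd_sum _ _ fun s _ => psd_vecMulVec (x s))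
  -- the per-round quantities
  set u : Fin T → ℝ := fun t => x t ⬝ᵥ (V t)⁻¹ *ᵥ x t with hu
  set A : Fin T → ℝ := fun t => x t ⬝ᵥ (V (ts (j t)))⁻¹ *ᵥ x t with hA
  have hu0 : ∀ t, 0 ≤ u t := fun t => psd_form (hVpd t).inv.posSemidef _
  have hA0 : ∀ t, 0 ≤ A t := fun t => psd_form (hVpd (ts (j t))).inv.posSemidef _
  -- norms of the actions
  have hxx : ∀ t, x t ⬝ᵥ x t ≤ D^2 := by
    intro t
    have h1 : euclNorm (x t) ≤ D := by
      rw [hx t, euclNorm_smul]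
      have h2 := (hγ t).1
      have h3 := (hγ t).2
      have : |γ t| ≤ 1 := abs_le.mpr ⟨by linarith, h3⟩
      calc |γ t| * euclNorm (xt t) ≤ 1 * euclNorm (xt t) :=
            mul_le_mul_of_nonneg_right this (euclNorm_nonneg _)
        _ = euclNorm (xt t) := one_mul _
        _ ≤ D := hxt t
    exact dot_self_le_sq h1
  -- u t ≤ 1
  have hu1 : ∀ t, u t ≤ 1 := by
    intro t
    have hsub : (V t - lam • (1:Matrix (Fin d) (Fin d) ℝ)).PosSemidef := by
      rw [hV t, add_sub_cancel_left]
      exact psd_sum _ _ fun s _ => psd_vecMulVec (x s)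
    have h1 := inv_antitone_pt (hVpd t) hpd1 hsub (x t)
    have hinv : (lam • (1:Matrix (Fin d) (Fin d) ℝ))⁻¹ = lam⁻¹ • 1 := by
      apply Matrix.inv_eq_right_inv
      rw [smul_mul_smul_comm, one_mul, mul_inv_cancel₀ hlam0.ne', one_smul]
    rw [hinv] at h1
    have h2 : x t ⬝ᵥ (lam⁻¹ • (1:Matrix (Fin d) (Fin d) ℝ)) *ᵥ x t
        = lam⁻¹ * (x t ⬝ᵥ x t) := by
      rw [Matrix.smul_mulVec, Matrix.one_mulVec, dotProduct_smul]
      rfl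
    have h3 : lam⁻¹ * (x t ⬝ᵥ x t) ≤ 1 := by
      have := hxx t
      rw [← mul_inv_cancel₀ hlam0.ne']
      have h4 : x t ⬝ᵥ x t ≤ lam := le_trans this hlamD
      calc lam⁻¹ * (x t ⬝ᵥ x t) ≤ lam⁻¹ * lam := by
            apply mul_le_mul_of_nonneg_left h4 (inv_nonneg.mpr hlam0.le)
        _ = lam * lam⁻¹ := mul_comm _ _
    exact le_trans h1 (by rw [h2] at *; exact h3)
  -- ℕ-indexed Gram matrices
  set Vn : ℕ → Matrix (Fin d) (Fin d) ℝ := fun k =>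
    lam • 1 + ∑ s ∈ Finset.univ.filter (fun s : Fin T => (s : ℕ) < k), vecMulVec (x s) (x s)
    with hVn
  have hVVn : ∀ t : Fin T, V t = Vn t.val := by
    intro t
    rw [hV t, hVn]
    congr 1
  have hVnpd : ∀ k, (Vn k).PosDef := by
    intro k
    exact hpd1.add_posSemidef (psd_sum _ _ fun s _ => psd_vecMulVec (x s))
  have hstep : ∀ k (hk : k < T),
      Vn (k+1) = Vn k + vecMulVec (x ⟨k, hk⟩) (x ⟨k, hk⟩) := by
    intro k hk
    have hins : Finset.univ.filter (fun s : Fin T => (s : ℕ) < k+1)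
        = insert ⟨k, hk⟩ (Finset.univ.filter (fun s : Fin T => (s : ℕ) < k)) := by
      ext s
      simp only [Finset.mem_filter, Finset.mem_univ, true_and, Finset.mem_insert, Fin.ext_iff]
      omega
    have hnm : (⟨k, hk⟩ : Fin T) ∉ Finset.univ.filter (fun s : Fin T => (s : ℕ) < k) := by
      simp
    rw [hVn]
    simp only
    rw [hins, Finset.sum_insert hnm]
    abel
  have hdetprod : ∀ k, k ≤ T → (Vn k).det
      = lam^d * ∏ t ∈ Finset.univ.filter (fun t : Fin T => (t : ℕ) < k), (1 + u t) := by
    intro k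
    induction k with
    | zero =>
      intro _
      have : Finset.univ.filter (fun t : Fin T => (t : ℕ) < 0) = ∅ := by
        ext s; simp
      rw [this]
      simp [hVn, Matrix.det_smul]
    | succ k ih =>
      intro hk1
      have hk : k < T := hk1
      have hins : Finset.univ.filter (fun s : Fin T => (s : ℕ) < k+1)
          = insert ⟨k, hk⟩ (Finset.univ.filter (fun s : Fin T => (s : ℕ) < k)) := by
        ext s
        simp only [Finset.mem_filter, Finset.mem_univ, true_and, Finset.mem_insert, Fin.ext_iff]
        omega
      have hnm : (⟨k, hk⟩ : Fin T) ∉ Finset.univ.filter (fun s : Fin T => (s : ℕ) < k) := by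
        simp
      rw [hstep k hk, det_add_vecMulVec (hVnpd k), ih (Nat.le_of_succ_le hk1), hins,
        Finset.prod_insert hnm]
      have hue : u ⟨k, hk⟩ = x ⟨k, hk⟩ ⬝ᵥ (Vn k)⁻¹ *ᵥ x ⟨k, hk⟩ := by
        rw [hu]
        simp only
        rw [hVVn ⟨k, hk⟩]
      rw [hue]
      ring
  -- the product bound
  have hfilT : Finset.univ.filter (fun t : Fin T => (t : ℕ) < T) = Finset.univ := by
    ext s; simp [s.isLt]
  have hdetT : (Vn T).det = lam^d * ∏ t, (1 + u t) := by
    rw [hdetprod T le_rfl, hfilT]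
  have htrace : (Vn T).trace = d * lam + ∑ t, (x t ⬝ᵥ x t) := by
    rw [hVn]
    simp only
    rw [Matrix.trace_add, Matrix.trace_smul, Matrix.trace_one, Matrix.trace_sum, hfilT]
    have e1 : lam • (Fintype.card (Fin d) : ℝ) = (d:ℝ) * lam := by
      simp [Fintype.card_fin, smul_eq_mul, mul_comm]
    rw [e1]
    congr 1
  have htrb : (Vn T).trace ≤ (d + T) * lam := by
    rw [htrace]
    have h1 : ∑ t, (x t ⬝ᵥ x t) ≤ ∑ _t : Fin T, D^2 :=
      Finset.sum_le_sum fun t _ => hxx t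
    simp only [Finset.sum_const, Finset.card_univ, Fintype.card_fin, nsmul_eq_mul] at h1
    have h2 : (T:ℝ) * D^2 ≤ T * lam :=
      mul_le_mul_of_nonneg_left hlamD (by positivity)
    nlinarith
  have hdpos : (0:ℝ) < d := by exact_mod_cast hd
  have htrnn : (0:ℝ) ≤ (Vn T).trace / d := by
    rw [htrace]
    have : (0:ℝ) ≤ ∑ t, (x t ⬝ᵥ x t) :=
      Finset.sum_nonneg fun t _ => psd_form Matrix.PosSemidef.one (x t) |>.trans_eq (by
        simp [Matrix.one_mulVec])
    positivity
  have hprodle : ∏ t, (1 + u t) ≤ ((1:ℝ) + T)^d := by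
    have h1 := det_le_trace_pow (hVnpd T) (by omega)
    have h2 : ((Vn T).trace / d)^d ≤ (((d:ℝ) + T) * lam / d)^d := by
      apply pow_le_pow_left₀ htrnn
      gcongr
    have h3 : (((d:ℝ) + T) * lam / d)^d = (((d:ℝ) + T)/d)^d * lam^d := by
      rw [← mul_pow]
      congr 1
      ring
    have h4 : lam^d * ∏ t, (1 + u t) ≤ (((d:ℝ) + T)/d)^d * lam^d := by
      rw [← hdetT, ← h3]
      exact le_trans h1 h2
    have h5 : ∏ t, (1 + u t) ≤ (((d:ℝ) + T)/d)^d := by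
      have hlp : (0:ℝ) < lam^d := pow_pos hlam0 d
      nlinarith [hlp]
    have h6 : (((d:ℝ) + T)/d)^d ≤ ((1:ℝ) + T)^d := by
      apply pow_le_pow_left₀ (by positivity)
      rw [div_le_iff₀ hdpos]
      have hT0 : (0:ℝ) ≤ T := by positivity
      have hd1 : (1:ℝ) ≤ d := by exact_mod_cast hd
      nlinarith
    exact le_trans h5 h6
  -- sum of u bounded by log det
  have hlogT0 : 0 ≤ Real.log T := Real.log_nonneg (by exact_mod_cast le_trans (by norm_num) hT)
  have hsumu : ∑ t, u t ≤ 4 * d * Real.log T := by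
    have h1 : ∑ t, u t ≤ ∑ t, 2 * Real.log (1 + u t) :=
      Finset.sum_le_sum fun t _ => le_two_log (hu0 t) (hu1 t)
    have h2 : ∑ t, 2 * Real.log (1 + u t) = 2 * Real.log (∏ t, (1 + u t)) := by
      rw [Real.log_prod (fun t _ => by nlinarith [hu0 t]), Finset.mul_sum]
    have hprodpos : (0:ℝ) < ∏ t, (1 + u t) :=
      Finset.prod_pos fun t _ => by nlinarith [hu0 t]
    have h3 : Real.log (∏ t, (1 + u t)) ≤ Real.log (((1:ℝ) + T)^d) :=
      Real.log_le_log hprodpos hprodle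
    have h4 : Real.log (((1:ℝ) + T)^d) = d * Real.log (1 + T) := by
      rw [Real.log_pow]
    have h5 : Real.log ((1:ℝ) + T) ≤ 2 * Real.log T := by
      have hTr : (3:ℝ) ≤ T := by exact_mod_cast hT
      have h6 : (1:ℝ) + T ≤ (T:ℝ)^2 := by nlinarith
      calc Real.log ((1:ℝ) + T) ≤ Real.log ((T:ℝ)^2) :=
            Real.log_le_log (by linarith) h6
        _ = 2 * Real.log T := by rw [Real.log_pow]; norm_num
    calc ∑ t, u t ≤ 2 * Real.log (∏ t, (1 + u t)) := by rw [← h2]; exact h1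
      _ ≤ 2 * ((d:ℝ) * Real.log (1 + T)) := by rw [← h4]; linarith
      _ ≤ 2 * ((d:ℝ) * (2 * Real.log T)) := by
          have : (0:ℝ) ≤ d := by positivity
          nlinarith [mul_le_mul_of_nonneg_left h5 this]
      _ = 4 * d * Real.log T := by ring
  -- a_t ≤ 2 u_t
  have hau : ∀ t, A t ≤ 2 * u t := by
    intro t
    have hle : ts (j t) ≤ t := (hj t).1
    have hsub2 : (V t - V (ts (j t))).PosSemidef := by
      rw [hV t, hV (ts (j t)), add_sub_add_left_eq_sub]
      have hss : Finset.univ.filter (fun s : Fin T => s < ts (j t))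
          ⊆ Finset.univ.filter (fun s : Fin T => s < t) := by
        intro s hs
        simp only [Finset.mem_filter, Finset.mem_univ, true_and] at *
        exact lt_of_lt_of_le hs hle
      rw [← Finset.sum_sdiff hss, add_sub_cancel_right]
      exact psd_sum _ _ fun s _ => psd_vecMulVec (x s)
    have h1 := lemmaA (hVpd t) (hVpd (ts (j t))) hsub2 (x t)
    have h2 : (V t).det / (V (ts (j t))).det ≤ 2 := by
      rw [div_le_iff₀ (hVpd (ts (j t))).det_pos]
      exact hdet t
    calc A t ≤ ((V t).det / (V (ts (j t))).det) * u t := h1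
      _ ≤ 2 * u t := mul_le_mul_of_nonneg_right h2 (hu0 t)
  -- per-round regret bound
  set K : ℝ := 2 * D * G * β / bmin with hK
  have hK0 : 0 ≤ K := by positivity
  have hround : ∀ t, f t (x t) - f t (xt t) ≤ K * Real.sqrt (A t) := by
    intro t
    have h1 : f t (x t) - f t (xt t) ≤ G * euclNorm (x t - xt t) :=
      le_trans (le_abs_self _) (hf t (x t) (xt t))
    have h2 : x t - xt t = (γ t - 1) • xt t := by
      rw [hx t, sub_smul, one_smul]
    have h3 : euclNorm (x t - xt t) = (1 - γ t) * euclNorm (xt t) := by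
      rw [h2, euclNorm_smul, abs_of_nonpos (by linarith [(hγ t).2]), neg_sub]
    have h4 : 1 - γ t ≤ (2 * β / bmin) * Real.sqrt (A t) := by
      have := hγlb t
      rw [wnorm] at this
      linarith
    have h5 : euclNorm (x t - xt t) ≤ ((2 * β / bmin) * Real.sqrt (A t)) * D := by
      rw [h3]
      have h1γ : 0 ≤ 1 - γ t := by linarith [(hγ t).2]
      calc (1 - γ t) * euclNorm (xt t) ≤ (1 - γ t) * D :=
            mul_le_mul_of_nonneg_left (hxt t) h1γ
        _ ≤ ((2 * β / bmin) * Real.sqrt (A t)) * D :=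
            mul_le_mul_of_nonneg_right h4 hD.le
    calc f t (x t) - f t (xt t) ≤ G * euclNorm (x t - xt t) := h1
      _ ≤ G * (((2 * β / bmin) * Real.sqrt (A t)) * D) :=
          mul_le_mul_of_nonneg_left h5 hG.le
      _ = K * Real.sqrt (A t) := by rw [hK]; ring
  -- sum up
  have hsum1 : ∑ t, (f t (x t) - f t (xt t)) ≤ K * ∑ t, Real.sqrt (A t) := by
    rw [Finset.mul_sum]
    exact Finset.sum_le_sum fun t _ => hround t
  have hCS : (∑ t, Real.sqrt (A t))^2 ≤ T * ∑ t, A t := by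
    have h1 := sq_sum_le_card_mul_sum_sq (s := Finset.univ)
      (f := fun t : Fin T => Real.sqrt (A t))
    simp only [Finset.card_univ, Fintype.card_fin] at h1
    calc (∑ t, Real.sqrt (A t))^2 ≤ (T:ℝ) * ∑ t, (Real.sqrt (A t))^2 := h1
      _ = T * ∑ t, A t := by
          congr 1
          exact Finset.sum_congr rfl fun t _ => Real.sq_sqrt (hA0 t)
  have hsumA : ∑ t, A t ≤ 8 * d * Real.log T := by
    have h1 : ∑ t, A t ≤ ∑ t, 2 * u t := Finset.sum_le_sum fun t _ => hau t
    have h2 : ∑ t, 2 * u t = 2 * ∑ t, u t := by rw [Finset.mul_sum]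
    nlinarith [hsumu]
  have hsqrtnn : 0 ≤ ∑ t, Real.sqrt (A t) :=
    Finset.sum_nonneg fun t _ => Real.sqrt_nonneg _
  have hsum2 : ∑ t, Real.sqrt (A t) ≤ Real.sqrt (12 * (d * (T * Real.log T))) := by
    rw [← Real.sqrt_sq hsqrtnn]
    apply Real.sqrt_le_sqrt
    calc (∑ t, Real.sqrt (A t))^2 ≤ T * ∑ t, A t := hCS
      _ ≤ (T:ℝ) * (8 * d * Real.log T) := by
          apply mul_le_mul_of_nonneg_left hsumA (by positivity)
      _ ≤ 12 * (d * (T * Real.log T)) := by nlinarith [hlogT0, hdpos, (by positivity : (0:ℝ) ≤ (T:ℝ))]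
  have hfinal : Real.sqrt (12 * (d * (T * Real.log T)))
      = 2 * Real.sqrt (3 * d * T * Real.log T) := by
    rw [show (12:ℝ) * (d * (T * Real.log T)) = 4 * (3 * d * T * Real.log T) by ring,
      Real.sqrt_mul (by norm_num : (0:ℝ) ≤ 4),
      show Real.sqrt 4 = 2 by
        rw [show (4:ℝ) = 2^2 by norm_num, Real.sqrt_sq (by norm_num : (0:ℝ) ≤ 2)]]
  calc ∑ t, (f t (x t) - f t (xt t)) ≤ K * ∑ t, Real.sqrt (A t) := hsum1
    _ ≤ K * (2 * Real.sqrt (3 * d * T * Real.log T)) := by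
        rw [← hfinal]
        exact mul_le_mul_of_nonneg_left hsum2 hK0
    _ = (4 * D * G * β / bmin) * Real.sqrt (3 * d * T * Real.log T) := by
        rw [hK]; ring
end
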